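/- arXiv:2410.17837 — 2 statements merged into one kernel-verified Lean document; each statement's English description precedes it below -/
import Mathlib

section
/- Let G be a connected finite simple graph on n vertices with even diameter d in which no two distinct vertices have equal neighborhoods, let P = v_1 ∼ v_2 ∼ ⋯ ∼ v_{d+1} be a diameter path of G, and suppose η(G) = n − d − 1. Let x be a vertex not on P whose only neighbor on P is v_{2a}, and let z be a vertex not on P whose neighbors on P are exactly v_{2b+1}, v_{2b+2}, v_{2b+3}. Then x is adjacent to z if and only if a = b + 1. -/
open Classical in
/-- The adjacency matrix of a finite simple graph over `ℝ`. -/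
noncomputable def adjMat {V : Type} [Fintype V] (G : SimpleGraph V) : Matrix V V ℝ :=
  Matrix.of fun i j => if G.Adj i j then (1 : ℝ) else 0

/-- The nullity `η(G)` of a finite simple graph: the dimension of the kernel of
its adjacency matrix over `ℝ`. -/
noncomputable def nullity {V : Type} [Fintype V] (G : SimpleGraph V) : ℕ :=
  Module.finrank ℝ (LinearMap.ker (adjMat G).mulVecLin)

lemma sumpick (n : ℕ) (c : ℕ → ℝ) (j : ℕ) :
    (∑ i ∈ Finset.range n, if i = j then c i else 0) = if j < n then c j else 0 := by
  rw [Finset.sum_ite_eq' (Finset.range n) j c]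
  simp [Finset.mem_range]

lemma chainOdd (d a b : ℕ) (q : ℕ → ℝ)
    (hE : ∀ m, m ≤ d → (if 1 ≤ m then q (m-1) else 0) + (if m+1 ≤ d then q (m+1) else 0)
      + (if m+1 = 2*a then q (d+1) else 0)
      + (if m = 2*b ∨ m = 2*b+1 ∨ m = 2*b+2 then q (d+2) else 0) = 0) :
    ∀ k, 2*k+1 ≤ d → q (2*k+1) = if k = b then -q (d+2) else 0 := by
  intro k
  induction k with
  | zero =>
    intro hk
    have h := hE 0 (by omega)
    rw [if_neg (by omega), if_pos (by omega), if_neg (by omega)] at h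
    by_cases hb : b = 0
    · rw [if_pos (by omega)] at h
      rw [if_pos (by omega)]
      norm_num at h ⊢
      linarith
    · rw [if_neg (by omega)] at h
      rw [if_neg (by omega)]
      linarith
  | succ n ih =>
    intro hk
    have hprev := ih (by omega)
    have h := hE (2*n+2) (by omega)
    rw [if_pos (by omega), if_pos (by omega), if_neg (by omega)] at h
    have hidx : 2*n+2-1 = 2*n+1 := by omega
    rw [hidx] at h
    have hidx2 : 2*n+2+1 = 2*(n+1)+1 := by omega
    rw [hidx2] at h
    by_cases h1 : n = b
    · rw [if_pos h1] at hprev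
      rw [if_pos (by omega)] at h
      rw [if_neg (by omega)]
      linarith
    · rw [if_neg h1] at hprev
      by_cases h2 : n + 1 = b
      · rw [if_pos (by omega)] at h
        rw [if_pos h2]
        linarith
      · rw [if_neg (by omega)] at h
        rw [if_neg h2]
        linarith

lemma chainEven (d a b : ℕ) (q : ℕ → ℝ)
    (hE : ∀ m, m ≤ d → (if 1 ≤ m then q (m-1) else 0) + (if m+1 ≤ d then q (m+1) else 0)
      + (if m+1 = 2*a then q (d+1) else 0)
      + (if m = 2*b ∨ m = 2*b+1 ∨ m = 2*b+2 then q (d+2) else 0) = 0)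
    (hβ : q (d+1) = 0) (hγ : q (d+2) = 0) (h0 : q 0 = 0) :
    ∀ k, 2*k ≤ d → q (2*k) = 0 := by
  intro k
  induction k with
  | zero => intro _; simpa using h0
  | succ n ih =>
    intro hk
    have hprev := ih (by omega)
    have h := hE (2*n+1) (by omega)
    rw [if_pos (by omega), if_pos (by omega)] at h
    have hidx : 2*n+1-1 = 2*n := by omega
    have hidx2 : 2*n+1+1 = 2*(n+1) := by omega
    rw [hidx, hidx2] at h
    rw [hβ, hγ] at h
    simp only [ite_self] at h
    linarith

/-- Let `G` be connected, twin-free, with even diameter `d`, let `p 0 ∼ ⋯ ∼ p d` be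
a diameter path (so `p i` is the vertex `v_{i+1}` in 1-indexed notation), and
suppose `η(G) = n - d - 1`. Let `x ∉ P` have `v_{2a}` as its only neighbour on the
path (the index `i` with `i + 1 = 2a`), and let `z ∉ P` have exactly
`v_{2b+1}, v_{2b+2}, v_{2b+3}` as neighbours on the path (indices `2b, 2b+1, 2b+2`).
Then `x ∼ z` if and only if `a = b + 1`. -/
theorem stmt18 {V : Type} [Fintype V] (G : SimpleGraph V)
    (hG : G.Connected) (heven : Even G.diam)
    (hreduced : ∀ c e : V, G.neighborSet c = G.neighborSet e → c = e)
    (p : Fin (G.diam + 1) → V)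
    (hadj : ∀ i : Fin G.diam, G.Adj (p i.castSucc) (p i.succ))
    (hdist : G.dist (p 0) (p (Fin.last G.diam)) = G.diam)
    (hnull : nullity G = Fintype.card V - G.diam - 1)
    (a b : ℕ) (ha1 : 1 ≤ a) (ha2 : 2 * a ≤ G.diam + 1) (hb : 2 * b + 2 ≤ G.diam)
    (x : V) (hx : x ∉ Set.range p)
    (hxN : ∀ i : Fin (G.diam + 1), G.Adj x (p i) ↔ (i : ℕ) + 1 = 2 * a)
    (z : V) (hz : z ∉ Set.range p)
    (hzN : ∀ i : Fin (G.diam + 1), G.Adj z (p i) ↔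
      ((i : ℕ) = 2 * b ∨ (i : ℕ) = 2 * b + 1 ∨ (i : ℕ) = 2 * b + 2)) :
    G.Adj x z ↔ a = b + 1 := by
  classical
  -- upper bound on distances along the path
  have hub : ∀ (k : ℕ) (i j : Fin (G.diam+1)), (i : ℕ) + k = (j : ℕ) → G.dist (p i) (p j) ≤ k := by
    intro k
    induction k with
    | zero =>
      intro i j h
      have : i = j := Fin.ext (by omega)
      rw [this, SimpleGraph.dist_self]
    | succ n ih =>
      intro i j h
      have hlt : (i : ℕ) + n < G.diam := by omega
      have hm : (i : ℕ) + n < G.diam + 1 := by omega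
      have h1 : G.dist (p i) (p ⟨(i : ℕ) + n, hm⟩) ≤ n := ih i _ rfl
      have h2 : G.Adj (p ⟨(i : ℕ) + n, hm⟩) (p j) := by
        have h3 := hadj ⟨(i : ℕ) + n, hlt⟩
        have e1 : (⟨(i : ℕ) + n, hlt⟩ : Fin G.diam).castSucc = ⟨(i : ℕ) + n, hm⟩ := by
          ext; simp
        have e2 : (⟨(i : ℕ) + n, hlt⟩ : Fin G.diam).succ = j := by
          ext; simp; omega
        rwa [e1, e2] at h3
      have h2' : G.dist (p ⟨(i : ℕ) + n, hm⟩) (p j) = 1 :=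
        (SimpleGraph.dist_eq_one_iff_adj).mpr h2
      calc G.dist (p i) (p j) ≤ G.dist (p i) (p ⟨(i : ℕ) + n, hm⟩)
            + G.dist (p ⟨(i : ℕ) + n, hm⟩) (p j) := hG.dist_triangle
        _ ≤ n + 1 := by omega
  have hpd : ∀ i j : Fin (G.diam+1), (i : ℕ) ≤ (j : ℕ) → G.dist (p i) (p j) = (j : ℕ) - (i : ℕ) := by
    intro i j hij
    have hu : G.dist (p i) (p j) ≤ (j : ℕ) - (i : ℕ) := hub _ i j (by omega)
    have h0i : G.dist (p 0) (p i) ≤ (i : ℕ) := hub _ 0 i (by simp)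
    have hjl : G.dist (p j) (p (Fin.last G.diam)) ≤ G.diam - (j : ℕ) := by
      apply hub _ j (Fin.last G.diam)
      simp [Fin.last]
      omega
    have t1 : G.dist (p 0) (p (Fin.last G.diam)) ≤ G.dist (p 0) (p i)
        + G.dist (p i) (p (Fin.last G.diam)) := hG.dist_triangle
    have t2 : G.dist (p i) (p (Fin.last G.diam)) ≤ G.dist (p i) (p j)
        + G.dist (p j) (p (Fin.last G.diam)) := hG.dist_triangle
    rw [hdist] at t1
    omega
  have hpadj : ∀ i j : Fin (G.diam+1), G.Adj (p i) (p j) ↔ ((i : ℕ)+1 = (j : ℕ) ∨ (j : ℕ)+1 = (i : ℕ)) := by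
    intro i j
    constructor
    · intro h
      have h1 : G.dist (p i) (p j) = 1 := (SimpleGraph.dist_eq_one_iff_adj).mpr h
      rcases le_total (i : ℕ) (j : ℕ) with hle | hle
      · have := hpd i j hle; omega
      · have := hpd j i hle
        rw [SimpleGraph.dist_comm] at h1
        omega
    · intro h
      rcases h with h | h
      · have hlt : (i : ℕ) < G.diam := by omega
        have h3 := hadj ⟨(i : ℕ), hlt⟩
        have e1 : (⟨(i : ℕ), hlt⟩ : Fin G.diam).castSucc = i := by ext; simp
        have e2 : (⟨(i : ℕ), hlt⟩ : Fin G.diam).succ = j := by ext; simp; omega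
        rwa [e1, e2] at h3
      · have hlt : (j : ℕ) < G.diam := by omega
        have h3 := hadj ⟨(j : ℕ), hlt⟩
        have e1 : (⟨(j : ℕ), hlt⟩ : Fin G.diam).castSucc = j := by ext; simp
        have e2 : (⟨(j : ℕ), hlt⟩ : Fin G.diam).succ = i := by ext; simp; omega
        rw [e1, e2] at h3
        exact h3.symm
  have hpinj : Function.Injective p := by
    intro i j hij
    rcases le_total (i : ℕ) (j : ℕ) with hle | hle
    · have := hpd i j hle
      rw [hij, SimpleGraph.dist_self] at this
      exact Fin.ext (by omega)
    · have := hpd j i hle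
      rw [hij, SimpleGraph.dist_self] at this
      exact Fin.ext (by omega)
  have hcard : G.diam + 1 ≤ Fintype.card V := by
    calc G.diam + 1 = Fintype.card (Fin (G.diam+1)) := (Fintype.card_fin _).symm
      _ ≤ Fintype.card V := Fintype.card_le_of_injective p hpinj
  -- rank of the adjacency matrix
  have hrankA : (adjMat G).rank = G.diam + 1 := by
    have h1 := LinearMap.finrank_range_add_finrank_ker (adjMat G).mulVecLin
    rw [Module.finrank_fintype_fun_eq_card] at h1
    rw [nullity] at hnull
    rw [Matrix.rank]
    omega
  -- the auxiliary vertex list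
  set g : ℕ → V := fun i => if h : i < G.diam + 1 then p ⟨i, h⟩ else if i = G.diam+1 then x else z with hgdef
  have hg1 : g (G.diam+1) = x := by
    simp only [hgdef]
    rw [dif_neg (by omega)]
    simp
  have hg2 : g (G.diam+2) = z := by
    simp only [hgdef]
    rw [dif_neg (by omega), if_neg (by omega)]
  have hgp : ∀ (j : ℕ) (h : j < G.diam + 1), g j = p ⟨j, h⟩ := by
    intro j h
    simp only [hgdef]
    rw [dif_pos h]
  set C : Matrix V (Fin (G.diam+3)) ℝ := Matrix.of fun v i => if v = g (i : ℕ) then 1 else 0 with hC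
  set Bt : Matrix V (Fin (G.diam+3)) ℝ := adjMat G * C with hBtdef
  have hBt : ∀ (w : V) (i : Fin (G.diam+3)), Bt w i = if G.Adj (g (i : ℕ)) w then 1 else 0 := by
    intro w i
    rw [hBtdef, Matrix.mul_apply]
    have hterm : ∀ v : V, adjMat G w v * C v i = if v = g (i : ℕ) then adjMat G w v else 0 := by
      intro v
      rw [hC]
      by_cases h : v = g (i : ℕ) <;> simp [h]
    rw [Finset.sum_congr rfl (fun v _ => hterm v)]
    rw [Finset.sum_ite_eq' Finset.univ (g (i : ℕ)) (adjMat G w)]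
    rw [if_pos (Finset.mem_univ _)]
    show (if G.Adj w (g (i : ℕ)) then (1:ℝ) else 0) = _
    by_cases h : G.Adj (g (i : ℕ)) w
    · rw [if_pos h.symm, if_pos h]
    · rw [if_neg (fun hh => h hh.symm), if_neg h]
  have hrankBt : Bt.rank ≤ G.diam + 1 := by
    rw [hBtdef]
    exact le_trans (Matrix.rank_mul_le_left _ _) (le_of_eq hrankA)
  have hker2 : 2 ≤ Module.finrank ℝ (LinearMap.ker Bt.mulVecLin) := by
    have h1 := LinearMap.finrank_range_add_finrank_ker Bt.mulVecLin
    rw [Module.finrank_fintype_fun_eq_card, Fintype.card_fin] at h1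
    rw [Matrix.rank] at hrankBt
    omega
  by_contra hcon
  -- the key kernel analysis
  have key : ∀ c : Fin (G.diam+3) → ℝ, Bt.mulVec c = 0 → c 0 = 0 → c = 0 := by
    intro c hc hc0
    set q : ℕ → ℝ := fun j => if h : j < G.diam+3 then c ⟨j, h⟩ else 0 with hq
    have hqc : ∀ i : Fin (G.diam+3), q (i : ℕ) = c i := by
      intro i
      simp only [hq]
      rw [dif_pos i.isLt]
    have hsum : ∀ w : V, (∑ j ∈ Finset.range (G.diam+3), if G.Adj (g j) w then q j else 0) = 0 := by
      intro w
      calc (∑ j ∈ Finset.range (G.diam+3), if G.Adj (g j) w then q j else 0)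
          = ∑ i : Fin (G.diam+3), (if G.Adj (g (i : ℕ)) w then q (i : ℕ) else 0) :=
            (Fin.sum_univ_eq_sum_range (fun j => if G.Adj (g j) w then q j else 0) (G.diam+3)).symm
        _ = ∑ i : Fin (G.diam+3), Bt w i * c i := by
            apply Finset.sum_congr rfl
            intro i _
            rw [hBt w i, hqc i]
            by_cases h : G.Adj (g (i : ℕ)) w <;> simp [h]
        _ = Bt.mulVec c w := by
            simp [Matrix.mulVec, dotProduct]
        _ = 0 := by rw [hc]; rfl
    -- the path equations
    have hE : ∀ m, m ≤ G.diam → (if 1 ≤ m then q (m-1) else 0) + (if m+1 ≤ G.diam then q (m+1) else 0)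
        + (if m+1 = 2*a then q (G.diam+1) else 0)
        + (if m = 2*b ∨ m = 2*b+1 ∨ m = 2*b+2 then q (G.diam+2) else 0) = 0 := by
      intro m hm
      have hmlt : m < G.diam + 1 := by omega
      have h0 := hsum (p ⟨m, hmlt⟩)
      rw [Finset.sum_range_succ, Finset.sum_range_succ] at h0
      rw [hg1, hg2] at h0
      rw [if_congr (hxN ⟨m, hmlt⟩) rfl rfl] at h0
      rw [if_congr (hzN ⟨m, hmlt⟩) rfl rfl] at h0
      have hpath : (∑ j ∈ Finset.range (G.diam+1), if G.Adj (g j) (p ⟨m, hmlt⟩) then q j else 0)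
          = (if 1 ≤ m then q (m-1) else 0) + (if m+1 ≤ G.diam then q (m+1) else 0) := by
        have step : ∀ j ∈ Finset.range (G.diam+1), (if G.Adj (g j) (p ⟨m, hmlt⟩) then q j else 0)
            = (if j+1 = m then q j else 0) + (if j = m+1 then q j else 0) := by
          intro j hj
          rw [Finset.mem_range] at hj
          rw [hgp j hj]
          rw [if_congr (hpadj ⟨j, hj⟩ ⟨m, hmlt⟩) rfl rfl]
          show (if (j+1 = m ∨ m+1 = j) then q j else 0) = _
          by_cases h1 : j + 1 = m
          · rw [if_pos (Or.inl h1), if_pos h1, if_neg (by omega)]; ring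
          · by_cases h2 : j = m+1
            · rw [if_pos (Or.inr (by omega)), if_neg h1, if_pos h2]; ring
            · rw [if_neg (by omega), if_neg h1, if_neg h2]; ring
        rw [Finset.sum_congr rfl step, Finset.sum_add_distrib]
        congr 1
        · rcases m with _ | m'
          · simp
          · have e : ∀ j ∈ Finset.range (G.diam+1), (if j+1 = m'+1 then q j else 0)
                = (if j = m' then q j else 0) := by
              intro j _
              exact if_congr (by omega) rfl rfl
            rw [Finset.sum_congr rfl e, sumpick]
            rw [if_pos (by omega), if_pos (by omega)]
            congr 1
        · rw [sumpick]
          by_cases h : m + 1 ≤ G.diam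
          · rw [if_pos (by omega), if_pos h]
          · rw [if_neg (by omega), if_neg h]
      rw [hpath] at h0
      linarith
    -- the equation at column x
    have hEx : q (2*a-1) + (if G.Adj x z then q (G.diam+2) else 0) = 0 := by
      have h0 := hsum x
      rw [Finset.sum_range_succ, Finset.sum_range_succ, hg1, hg2] at h0
      rw [if_neg (G.irrefl)] at h0
      rw [if_congr (G.adj_comm z x) rfl rfl] at h0
      have hpath : (∑ j ∈ Finset.range (G.diam+1), if G.Adj (g j) x then q j else 0) = q (2*a-1) := by
        have step : ∀ j ∈ Finset.range (G.diam+1), (if G.Adj (g j) x then q j else 0)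
            = (if j = 2*a-1 then q j else 0) := by
          intro j hj
          rw [Finset.mem_range] at hj
          rw [hgp j hj]
          refine if_congr ?_ rfl rfl
          rw [G.adj_comm, hxN ⟨j, hj⟩]
          show (j : ℕ) + 1 = 2*a ↔ j = 2*a-1
          omega
        rw [Finset.sum_congr rfl step, sumpick, if_pos (by omega)]
      rw [hpath] at h0
      linarith
    -- the equation at column z
    have hEz : q (2*b) + q (2*b+1) + q (2*b+2) + (if G.Adj x z then q (G.diam+1) else 0) = 0 := by
      have h0 := hsum z
      rw [Finset.sum_range_succ, Finset.sum_range_succ, hg1, hg2] at h0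
      rw [if_neg (G.irrefl)] at h0
      have hpath : (∑ j ∈ Finset.range (G.diam+1), if G.Adj (g j) z then q j else 0)
          = q (2*b) + q (2*b+1) + q (2*b+2) := by
        have step : ∀ j ∈ Finset.range (G.diam+1), (if G.Adj (g j) z then q j else 0)
            = ((if j = 2*b then q j else 0) + (if j = 2*b+1 then q j else 0))
              + (if j = 2*b+2 then q j else 0) := by
          intro j hj
          rw [Finset.mem_range] at hj
          rw [hgp j hj]
          rw [if_congr (Iff.trans (G.adj_comm _ _) (hzN ⟨j, hj⟩)) rfl rfl]
          show (if (j = 2*b ∨ j = 2*b+1 ∨ j = 2*b+2) then q j else 0) = _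
          by_cases h1 : j = 2*b
          · rw [if_pos (Or.inl h1), if_pos h1, if_neg (by omega), if_neg (by omega)]; ring
          · by_cases h2 : j = 2*b+1
            · rw [if_pos (Or.inr (Or.inl h2)), if_neg h1, if_pos h2, if_neg (by omega)]; ring
            · by_cases h3 : j = 2*b+2
              · rw [if_pos (Or.inr (Or.inr h3)), if_neg h1, if_neg h2, if_pos h3]; ring
              · rw [if_neg (by omega), if_neg h1, if_neg h2, if_neg h3]; ring
        rw [Finset.sum_congr rfl step, Finset.sum_add_distrib, Finset.sum_add_distrib]
        rw [sumpick, sumpick, sumpick]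
        rw [if_pos (by omega), if_pos (by omega), if_pos (by omega)]
      rw [hpath] at h0
      linarith
    have hodd := chainOdd G.diam a b q hE
    have hq2a : q (2*a-1) = if a = b+1 then -q (G.diam+2) else 0 := by
      have h1 := hodd (a-1) (by omega)
      have e : 2*(a-1)+1 = 2*a-1 := by omega
      rw [e] at h1
      rw [h1]
      exact if_congr (by omega) rfl rfl
    have hqb1 : q (2*b+1) = -q (G.diam+2) := by
      have h1 := hodd b (by omega)
      rw [h1, if_pos rfl]
    have hEb : q (2*b) + q (2*b+2) + (if a = b+1 then q (G.diam+1) else 0) + q (G.diam+2) = 0 := by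
      have h1 := hE (2*b+1) (by omega)
      rw [if_pos (by omega), if_pos (by omega)] at h1
      rw [if_congr (show 2*b+1+1 = 2*a ↔ a = b+1 by omega) rfl rfl] at h1
      rw [if_pos (Or.inr (Or.inl rfl))] at h1
      have e1 : 2*b+1-1 = 2*b := by omega
      have e2 : 2*b+1+1 = 2*b+2 := by omega
      rw [e1, e2] at h1
      linarith
    have hγβ : q (G.diam+2) = 0 ∧ q (G.diam+1) = 0 := by
      by_cases hadjxz : G.Adj x z
      · have hne : a ≠ b+1 := fun h => hcon (iff_of_true hadjxz h)
        rw [if_pos hadjxz] at hEx hEz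
        rw [if_neg hne] at hq2a hEb
        constructor
        · linarith
        · linarith
      · have heq : a = b + 1 := by
          by_contra hne
          exact hcon (iff_of_false hadjxz hne)
        rw [if_neg hadjxz] at hEx hEz
        rw [if_pos heq] at hq2a hEb
        constructor
        · linarith
        · linarith
    have hq0 : q 0 = 0 := by
      have : q ((0 : Fin (G.diam+3)) : ℕ) = c 0 := hqc 0
      simpa [hc0] using this
    have heven' := chainEven G.diam a b q hE hγβ.2 hγβ.1 hq0
    funext i
    show c i = 0
    rw [← hqc i]
    have hi3 : (i : ℕ) < G.diam + 3 := i.isLt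
    rcases Nat.lt_or_ge (i : ℕ) (G.diam+1) with hcase | hcase
    · rcases Nat.even_or_odd (i : ℕ) with ⟨k, hk⟩ | ⟨k, hk⟩
      · have e : (i : ℕ) = 2*k := by omega
        rw [e]
        exact heven' k (by omega)
      · have e : (i : ℕ) = 2*k+1 := by omega
        rw [e]
        rw [hodd k (by omega), hγβ.1]
        simp
    · rcases Nat.lt_or_ge (i : ℕ) (G.diam+2) with hcase2 | hcase2
      · have e : (i : ℕ) = G.diam+1 := by omega
        rw [e]; exact hγβ.2
      · have e : (i : ℕ) = G.diam+2 := by omega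
        rw [e]; exact hγβ.1
  -- conclude via dimension counting
  let π : LinearMap.ker Bt.mulVecLin →ₗ[ℝ] ℝ :=
    (LinearMap.proj (0 : Fin (G.diam+3))).comp (Submodule.subtype _)
  have hπ : Function.Injective π := by
    apply (injective_iff_map_eq_zero π).mpr
    intro cc hcc
    have hmem : Bt.mulVec cc.1 = 0 := cc.2
    have hcc0 : cc.1 0 = 0 := hcc
    exact Subtype.ext (key cc.1 hmem hcc0)
  have hle := LinearMap.finrank_le_finrank_of_injective hπ
  rw [Module.finrank_self] at hle
  omega
end

section
/- Let G be a finite simple graph, H an induced subgraph of G, h a vertex of H, and v, x two distinct vertices of G not in H such that: v is not adjacent to h, v is not adjacent to x, x is adjacent to h, and N_H(v) = N_H(h) (v and h have the same neighbors among the vertices of H other than h). Then the adjacency matrix of the induced subgraph on V(H) ∪ {v, x} has rank equal to rank A(H) + 2. -/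
lemma aux_finrank_prod {M N : Type*} [AddCommGroup M] [Module ℝ M] [AddCommGroup N] [Module ℝ N]
    [FiniteDimensional ℝ M] [FiniteDimensional ℝ N] (p : Submodule ℝ M) (q : Submodule ℝ N) :
    Module.finrank ℝ (p.prod q) = Module.finrank ℝ p + Module.finrank ℝ q := by
  have e : (p.prod q) ≃ₗ[ℝ] p × q :=
  { toFun := fun z => (⟨z.1.1, z.2.1⟩, ⟨z.1.2, z.2.2⟩)
    invFun := fun z => ⟨(z.1.1, z.2.1), ⟨z.1.2, z.2.2⟩⟩
    map_add' := fun _ _ => rfl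
    map_smul' := fun _ _ => rfl
    left_inv := fun _ => rfl
    right_inv := fun _ => rfl }
  rw [e.finrank_eq, Module.finrank_prod]

lemma aux_rank_fromBlocks_diag {m n : Type*} [Fintype m] [Fintype n]
    (A : Matrix m m ℝ) (D : Matrix n n ℝ) :
    (Matrix.fromBlocks A 0 0 D).rank = A.rank + D.rank := by
  classical
  set e := (LinearEquiv.sumArrowLequivProdArrow m n ℝ ℝ).symm with he
  have hrange : LinearMap.range (Matrix.fromBlocks A 0 0 D).mulVecLin =
      ((LinearMap.range A.mulVecLin).prod (LinearMap.range D.mulVecLin)).map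
        (e : ((m → ℝ) × (n → ℝ)) →ₗ[ℝ] (m ⊕ n → ℝ)) := by
    ext w
    constructor
    · rintro ⟨u, rfl⟩
      refine ⟨(A.mulVec (u ∘ Sum.inl), D.mulVec (u ∘ Sum.inr)), ⟨⟨_, rfl⟩, ⟨_, rfl⟩⟩, ?_⟩
      ext i
      cases i <;>
        simp [Matrix.mulVecLin_apply, Matrix.fromBlocks_mulVec, he,
          LinearEquiv.sumArrowLequivProdArrow, Matrix.zero_mulVec]
    · rintro ⟨⟨f, g⟩, ⟨⟨a, ha⟩, ⟨b, hb⟩⟩, rfl⟩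
      refine ⟨Sum.elim a b, ?_⟩
      ext i
      simp only [Prod.fst, Prod.snd, Matrix.mulVecLin_apply] at ha hb
      cases i <;>
        simp [Matrix.mulVecLin_apply, Matrix.fromBlocks_mulVec, ha, hb, he,
          LinearEquiv.sumArrowLequivProdArrow, Matrix.zero_mulVec, Sum.elim_comp_inl,
          Sum.elim_comp_inr]
  rw [Matrix.rank, hrange, LinearEquiv.finrank_map_eq, aux_finrank_prod, Matrix.rank, Matrix.rank]

/-- Let `H = G[S]` be an induced subgraph of `G`, let `h ∈ S`, and let `v, x` be
two distinct vertices outside `S` such that `v ≁ h`, `v ≁ x`, `x ∼ h`, and `v` and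
`h` have the same neighbours among the vertices of `H` other than `h`. Then the
adjacency matrix of the induced subgraph on `S ∪ {v, x}` has rank
`rank A(H) + 2`. -/
theorem stmt19 {V : Type} [Fintype V] [DecidableEq V] (G : SimpleGraph V)
    (S : Set V) [Fintype S] (h : V) (hh : h ∈ S)
    (v x : V) (hv : v ∉ S) (hx : x ∉ S) (hvx : v ≠ x)
    (hvh : ¬ G.Adj v h) (hvxadj : ¬ G.Adj v x) (hxh : G.Adj x h)
    (hN : ∀ u ∈ S, u ≠ h → (G.Adj v u ↔ G.Adj h u)) :
    (adjMat (G.induce (S ∪ {v, x}))).rank = (adjMat (G.induce S)).rank + 2 := by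
  classical
  set T : Set V := S ∪ {v, x} with hT
  have hvT : v ∈ T := Or.inr (Or.inl rfl)
  have hxT : x ∈ T := Or.inr (Or.inr rfl)
  set h' : ↥S := ⟨h, hh⟩ with hh'
  -- adjacency entries
  have adjT : ∀ a b : ↥T, adjMat (G.induce T) a b = if G.Adj (a : V) (b : V) then 1 else 0 := by
    intro a b
    simp only [adjMat, Matrix.of_apply]
    exact if_congr (by simp) rfl rfl
  have adjS : ∀ a b : ↥S, adjMat (G.induce S) a b = if G.Adj (a : V) (b : V) then 1 else 0 := by
    intro a b
    simp only [adjMat, Matrix.of_apply]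
    exact if_congr (by simp) rfl rfl
  -- the reindexing equivalence
  let e : (↥S ⊕ Fin 2) ≃ ↥T :=
  { toFun := Sum.elim (fun s => ⟨s.1, Or.inl s.2⟩) ![⟨v, hvT⟩, ⟨x, hxT⟩]
    invFun := fun t => if htS : (t : V) ∈ S then Sum.inl ⟨t, htS⟩
      else if (t : V) = v then Sum.inr 0 else Sum.inr 1
    left_inv := by
      rintro (s | i)
      · simp [s.2]
      · fin_cases i
        · simp [hv]
        · simp [hx, hvx.symm]
    right_inv := by
      rintro ⟨t, ht⟩
      by_cases htS : t ∈ S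
      · simp [htS]
      · rcases ht with ht | ht | ht
        · exact absurd ht htS
        · subst ht
          simp [hv]
        · subst ht
          simp [hx, Ne.symm hvx]
    }
  have he0 : ((e (Sum.inr 0)) : V) = v := rfl
  have he1 : ((e (Sum.inr 1)) : V) = x := rfl
  have hes : ∀ s : ↥S, ((e (Sum.inl s)) : V) = (s : V) := fun _ => rfl
  set A' : Matrix (↥S ⊕ Fin 2) (↥S ⊕ Fin 2) ℝ := (adjMat (G.induce T)).submatrix e e with hA'def
  have hrank1 : A'.rank = (adjMat (G.induce T)).rank := Matrix.rank_submatrix _ e e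
  have hA' : ∀ i j, A' i j = if G.Adj ((e i) : V) ((e j) : V) then 1 else 0 := by
    intro i j
    simp only [hA'def, Matrix.submatrix_apply]
    exact adjT _ _
  -- row/column operations
  set P : Matrix (↥S ⊕ Fin 2) (↥S ⊕ Fin 2) ℝ :=
    Matrix.transvection (Sum.inr 0) (Sum.inl h') (-1) with hP
  set Q : Matrix (↥S ⊕ Fin 2) (↥S ⊕ Fin 2) ℝ :=
    Matrix.transvection (Sum.inl h') (Sum.inr 0) (-1) with hQ
  set M : Matrix (↥S ⊕ Fin 2) (↥S ⊕ Fin 2) ℝ := P * (A' * Q) with hM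
  have hdetP : IsUnit P.det := by
    rw [hP, Matrix.det_transvection_of_ne _ _ (by simp) _]; exact isUnit_one
  have hdetQ : IsUnit Q.det := by
    rw [hQ, Matrix.det_transvection_of_ne _ _ (by simp) _]; exact isUnit_one
  have hMrank : M.rank = A'.rank := by
    rw [hM, Matrix.rank_mul_eq_right_of_isUnit_det _ _ hdetP,
      Matrix.rank_mul_eq_left_of_isUnit_det _ _ hdetQ]
  -- helper : differences vanish
  have hdiff : ∀ t : ↥S, (if G.Adj v (t : V) then (1:ℝ) else 0) = if G.Adj h (t : V) then 1 else 0 := by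
    intro t
    by_cases hth : (t : V) = h
    · rw [hth]
      simp [hvh, G.irrefl]
    · exact if_congr (hN t t.2 hth) rfl rfl
  -- entries of A' * Q
  have hAQ_ne : ∀ i j, j ≠ Sum.inr 0 → (A' * Q) i j = A' i j := by
    intro i j hj
    rw [hQ, Matrix.mul_transvection_apply_of_ne _ _ _ _ hj]
  have hAQ_same : ∀ i, (A' * Q) i (Sum.inr 0) = A' i (Sum.inr 0) + (-1) * A' i (Sum.inl h') := by
    intro i
    rw [hQ, Matrix.mul_transvection_apply_same]
  have hPN_ne : ∀ (N : Matrix (↥S ⊕ Fin 2) (↥S ⊕ Fin 2) ℝ) i j, i ≠ Sum.inr 0 →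
      (P * N) i j = N i j := by
    intro N i j hi
    rw [hP, Matrix.transvection_mul_apply_of_ne _ _ _ _ hi]
  have hPN_same : ∀ (N : Matrix (↥S ⊕ Fin 2) (↥S ⊕ Fin 2) ℝ) j,
      (P * N) (Sum.inr 0) j = N (Sum.inr 0) j + (-1) * N (Sum.inl h') j := by
    intro N j
    rw [hP, Matrix.transvection_mul_apply_same]
  -- target blocks
  set c : ↥S → ℝ := fun s => if G.Adj x (s : V) then 1 else 0 with hc
  set C : Matrix ↥S (Fin 2) ℝ := Matrix.of (fun s i => if i = 1 then c s else 0) with hC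
  set Rm : Matrix (Fin 2) ↥S ℝ := Matrix.of (fun i s => if i = 1 then c s else 0) with hRm
  set D : Matrix (Fin 2) (Fin 2) ℝ := !![0,-1;-1,0] with hD
  have hhv : ¬ G.Adj h v := fun hq => hvh hq.symm
  have hhx : G.Adj h x := hxh.symm
  have hxv : ¬ G.Adj x v := fun hq => hvxadj hq.symm
  have hMeq : M = Matrix.fromBlocks (adjMat (G.induce S)) C Rm D := by
    rw [hM]
    ext i j
    rcases i with s | i
    · rcases j with t | j
      · rw [hPN_ne _ _ _ (by simp), hAQ_ne _ _ (by simp), hA', hes, hes,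
          Matrix.fromBlocks_apply₁₁, adjS]
      · fin_cases j
        · show (P * (A' * Q)) (Sum.inl s) (Sum.inr 0) =
            Matrix.fromBlocks (adjMat (G.induce S)) C Rm D (Sum.inl s) (Sum.inr 0)
          rw [hPN_ne _ _ _ (by simp), hAQ_same, hA', hA', hes, hes, he0,
            Matrix.fromBlocks_apply₁₂]
          have h1 : (if G.Adj (s : V) v then (1:ℝ) else 0) = if G.Adj (s : V) h then 1 else 0 := by
            rw [G.adj_comm (s:V) v, G.adj_comm (s:V) h]; exact hdiff s
          simp [hC, h1, hh']
          split_ifs <;> norm_num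
        · show (P * (A' * Q)) (Sum.inl s) (Sum.inr 1) =
            Matrix.fromBlocks (adjMat (G.induce S)) C Rm D (Sum.inl s) (Sum.inr 1)
          rw [hPN_ne _ _ _ (by simp), hAQ_ne _ _ (by simp), hA', hes, he1,
            Matrix.fromBlocks_apply₁₂]
          simp [hC, hc, G.adj_comm (s : V) x]
    · fin_cases i
      · show (P * (A' * Q)) (Sum.inr 0) j =
          Matrix.fromBlocks (adjMat (G.induce S)) C Rm D (Sum.inr 0) j
        rw [hPN_same]
        rcases j with t | j
        · rw [hAQ_ne _ _ (by simp), hAQ_ne _ _ (by simp), hA', hA', hes, hes, he0,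
            Matrix.fromBlocks_apply₂₁]
          have := hdiff t
          simp only [hRm, Matrix.of_apply, hh']
          rw [this, if_neg (by decide : ¬ (0 : Fin 2) = 1)]
          split_ifs <;> norm_num
        · fin_cases j
          · show (A' * Q) (Sum.inr 0) (Sum.inr 0) + -1 * (A' * Q) (Sum.inl h') (Sum.inr 0) =
              Matrix.fromBlocks (adjMat (G.induce S)) C Rm D (Sum.inr 0) (Sum.inr 0)
            rw [hAQ_same, hAQ_same, hA', hA', hA', hA', Matrix.fromBlocks_apply₂₂]
            simp [hes, he0, hD, hh', G.irrefl, hvh, hhv]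
          · show (A' * Q) (Sum.inr 0) (Sum.inr 1) + -1 * (A' * Q) (Sum.inl h') (Sum.inr 1) =
              Matrix.fromBlocks (adjMat (G.induce S)) C Rm D (Sum.inr 0) (Sum.inr 1)
            rw [hAQ_ne _ _ (by simp), hAQ_ne _ _ (by simp), hA', hA',
              Matrix.fromBlocks_apply₂₂]
            simp [hes, he0, he1, hD, hh', hvxadj, hhx]
      · show (P * (A' * Q)) (Sum.inr 1) j =
          Matrix.fromBlocks (adjMat (G.induce S)) C Rm D (Sum.inr 1) j
        rw [hPN_ne _ _ _ (by simp)]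
        rcases j with t | j
        · rw [hAQ_ne _ _ (by simp), hA', hes, he1, Matrix.fromBlocks_apply₂₁]
          simp [hRm, hc]
        · fin_cases j
          · show (A' * Q) (Sum.inr 1) (Sum.inr 0) =
              Matrix.fromBlocks (adjMat (G.induce S)) C Rm D (Sum.inr 1) (Sum.inr 0)
            rw [hAQ_same, hA', hA', Matrix.fromBlocks_apply₂₂]
            simp [hes, he0, he1, hD, hh', hxv, hxh]
          · show (A' * Q) (Sum.inr 1) (Sum.inr 1) =
              Matrix.fromBlocks (adjMat (G.induce S)) C Rm D (Sum.inr 1) (Sum.inr 1)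
            rw [hAQ_ne _ _ (by simp), hA', Matrix.fromBlocks_apply₂₂]
            simp [he1, hD, G.irrefl]
  -- Schur decomposition
  have hDD : D * D = 1 := by
    ext i j
    fin_cases i <;> fin_cases j <;>
      simp [hD, Matrix.mul_apply, Fin.sum_univ_two]
  haveI : Invertible D := ⟨D, hDD, hDD⟩
  have hinvD : ⅟D = D := invOf_eq_right_inv hDD
  have hCDR : C * ⅟D * Rm = 0 := by
    rw [hinvD]
    ext s t
    simp [hC, hRm, hD, Matrix.mul_apply, Fin.sum_univ_two]
  have hschur := Matrix.fromBlocks_eq_of_invertible₂₂ (adjMat (G.induce S)) C Rm D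
  rw [hCDR, sub_zero] at hschur
  have hdetU : IsUnit (Matrix.fromBlocks (1 : Matrix ↥S ↥S ℝ) (C * ⅟D) 0
      (1 : Matrix (Fin 2) (Fin 2) ℝ)).det := by
    rw [Matrix.det_fromBlocks_zero₂₁]
    simp
  have hdetL : IsUnit (Matrix.fromBlocks (1 : Matrix ↥S ↥S ℝ) 0 (⅟D * Rm)
      (1 : Matrix (Fin 2) (Fin 2) ℝ)).det := by
    rw [Matrix.det_fromBlocks_zero₁₂]
    simp
  have hrankM : M.rank = (Matrix.fromBlocks (adjMat (G.induce S)) 0 0 D).rank := by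
    rw [hMeq, hschur, Matrix.rank_mul_eq_left_of_isUnit_det _ _ hdetL,
      Matrix.rank_mul_eq_right_of_isUnit_det _ _ hdetU]
  have hrankD : D.rank = 2 := by
    rw [Matrix.rank_of_isUnit D (isUnit_of_invertible D)]
    simp
  rw [← hrank1, ← hMrank, hrankM, aux_rank_fromBlocks_diag, hrankD]
end
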